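/- arXiv:1706.05266 — 3 statements merged into one kernel-verified Lean document; each statement's English description precedes it below -/
import Mathlib

section
/- Let u ∈ W^{1,1}(ℝⁿ, ℝᵈ). Then there is a constant C_M depending only on n and d such that for every ball B ⊂ ℝⁿ of radius r > 0 and every ε > 0, the diameter of the set {u(x) : x ∈ B, (M∇u)(x) ≤ ε} is at most C_M · ε · r, where M denotes the Hardy–Littlewood maximal operator applied to |∇u|. -/
/-!
For `x` in the ball `B = B(x₀, r)`, the fundamental theorem of calculus along segments gives
`|u z - u x| ≤ |z - x| ∫₀¹ |∇u (x + t (z - x))| dt`. Integrating over `z ∈ B` and exchanging the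
integrals, the homothety `z ↦ x + t (z - x)` maps `B` into `B(x, 2tr)` with Jacobian `tⁿ`, so each
inner integral is at most `t⁻ⁿ ∫_{B(x, 2tr)} |∇u| ≤ 2ⁿ |B| M∇u(x)`. Hence the mean oscillation
`⨍_B |u z - u x| dz` is at most `2ⁿ⁺¹ r M∇u(x)`, and two such points are compared by averaging
the triangle inequality `|u x - u y| ≤ |u z - u x| + |u z - u y|` over `z ∈ B`.
-/

open MeasureTheory Metric Set
open scoped ENNReal NNReal

/-- The Hardy–Littlewood maximal function of an `ℝ≥0∞`-valued function. -/
noncomputable def maxFn {n : ℕ} (f : EuclideanSpace ℝ (Fin n) → ℝ≥0∞)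
    (x : EuclideanSpace ℝ (Fin n)) : ℝ≥0∞ :=
  ⨆ (r : ℝ) (_ : 0 < r), (∫⁻ y in Metric.ball x r, f y) / volume (Metric.ball x r)

section

open Module

variable {E F : Type*} [NormedAddCommGroup E] [NormedSpace ℝ E]
  [NormedAddCommGroup F] [NormedSpace ℝ F] [CompleteSpace F]

theorem enorm_sub_le_setLIntegral_enorm_deriv {g : ℝ → F} {a b : ℝ} (hab : a ≤ b)
    (hgc : ContinuousOn g (Icc a b)) (hgd : DifferentiableOn ℝ g (Ioo a b)) :
    ‖g b - g a‖ₑ ≤ ∫⁻ t in Ioc a b, ‖deriv g t‖ₑ := by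
  by_cases hfin : ∫⁻ t in Ioc a b, ‖deriv g t‖ₑ = ∞
  · simp [hfin]
  have hint : IntegrableOn (fun t => ‖deriv g t‖) (Ioc a b) :=
    ⟨(aestronglyMeasurable_deriv g _).norm, by
      simpa [HasFiniteIntegral, enorm_norm] using lt_top_iff_ne_top.2 hfin⟩
  have hle := norm_sub_le_integral_of_norm_deriv_le_of_le hab hgc hgd
    (.of_forall fun _ _ => le_rfl) ((intervalIntegrable_iff_integrableOn_Ioc_of_le hab).2 hint)
  rw [intervalIntegral.integral_of_le hab] at hle
  calc ‖g b - g a‖ₑ = ENNReal.ofReal ‖g b - g a‖ := (ofReal_norm _).symm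
    _ ≤ ENNReal.ofReal (∫ t in Ioc a b, ‖deriv g t‖) := ENNReal.ofReal_le_ofReal hle
    _ = ∫⁻ t in Ioc a b, ‖deriv g t‖ₑ := by
      rw [ofReal_integral_eq_lintegral_ofReal hint (.of_forall fun _ => norm_nonneg _)]
      simp only [ofReal_norm]

theorem enorm_sub_le_setLIntegral_fderiv_segment {u : E → F} (hu : Differentiable ℝ u)
    (x z : E) :
    ‖u z - u x‖ₑ ≤ (∫⁻ t in Ioc (0 : ℝ) 1, ‖fderiv ℝ u (x + t • (z - x))‖ₑ) * ‖z - x‖ₑ := by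
  set γ : ℝ → E := fun t => x + t • (z - x)
  have hγ (t : ℝ) : HasDerivAt γ (z - x) t := by
    show HasDerivAt (fun s : ℝ => x + s • (z - x)) _ t
    simpa using ((hasDerivAt_id t).smul_const (z - x)).const_add x
  have hder (t : ℝ) : HasDerivAt (u ∘ γ) (fderiv ℝ u (γ t) (z - x)) t :=
    (hu (γ t)).hasFDerivAt.comp_hasDerivAt t (hγ t)
  have hdiff : Differentiable ℝ (u ∘ γ) := fun t => (hder t).differentiableAt
  calc ‖u z - u x‖ₑ = ‖(u ∘ γ) 1 - (u ∘ γ) 0‖ₑ := by simp [γ]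
    _ ≤ ∫⁻ t in Ioc (0 : ℝ) 1, ‖deriv (u ∘ γ) t‖ₑ :=
      enorm_sub_le_setLIntegral_enorm_deriv zero_le_one hdiff.continuous.continuousOn
        hdiff.differentiableOn
    _ ≤ ∫⁻ t in Ioc (0 : ℝ) 1, ‖fderiv ℝ u (γ t)‖ₑ * ‖z - x‖ₑ :=
      lintegral_mono fun t => (hder t).deriv ▸ (fderiv ℝ u (γ t)).le_opENorm (z - x)
    _ = _ := lintegral_mul_const' _ _ enorm_ne_top

variable [MeasurableSpace E] [BorelSpace E] [FiniteDimensional ℝ E]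
  (μ : Measure E) [μ.IsAddHaarMeasure]

theorem lintegral_comp_homothety {f : E → ℝ≥0∞} (hf : Measurable f) (x : E) {t : ℝ}
    (ht : 0 < t) :
    ∫⁻ z, f (x + t • (z - x)) ∂μ = ENNReal.ofReal (t ^ finrank ℝ E)⁻¹ * ∫⁻ w, f w ∂μ := by
  have hshift : ∀ z, x + t • (z - x) = t • z + (x - t • x) := fun z => by
    rw [smul_sub]; abel
  simp_rw [hshift]
  rw [← lintegral_map (f := fun w => f (w + (x - t • x))) (hf.comp (measurable_add_const _))
      (measurable_const_smul t), Measure.map_addHaar_smul μ ht.ne', lintegral_smul_measure,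
    lintegral_add_right_eq_self (fun w => f w), abs_of_pos (by positivity), smul_eq_mul]

theorem setLIntegral_ball_comp_homothety_le {g : E → ℝ≥0∞} (hg : Measurable g) {x₀ x : E}
    {r t : ℝ} {ε : ℝ≥0∞} (hx : x ∈ ball x₀ r) (ht : 0 < t)
    (hmax : ∀ s > 0, ∫⁻ y in ball x s, g y ∂μ ≤ ε * μ (ball x s)) :
    ∫⁻ z in ball x₀ r, g (x + t • (z - x)) ∂μ ≤ 2 ^ finrank ℝ E * ε * μ (ball x₀ r) := by
  have hr : 0 < r := pos_of_mem_ball hx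
  have hmaps : ∀ z ∈ ball x₀ r, x + t • (z - x) ∈ ball x (2 * t * r) := fun z hz => by
    have hzx : dist z x < 2 * r := (dist_triangle z x₀ x).trans_lt <| by
      rw [dist_comm x₀ x]; linarith [mem_ball.1 hz, mem_ball.1 hx]
    rw [mem_ball, dist_eq_norm, add_sub_cancel_left, norm_smul, Real.norm_of_nonneg ht.le,
      ← dist_eq_norm]
    nlinarith
  calc ∫⁻ z in ball x₀ r, g (x + t • (z - x)) ∂μ
      ≤ ∫⁻ z, (ball x (2 * t * r)).indicator g (x + t • (z - x)) ∂μ := by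
        rw [← lintegral_indicator measurableSet_ball]
        refine lintegral_mono fun z => ?_
        by_cases hz : z ∈ ball x₀ r
        · rw [indicator_of_mem hz, indicator_of_mem (hmaps z hz)]
        · simp [indicator_of_notMem hz]
    _ = ENNReal.ofReal (t ^ finrank ℝ E)⁻¹ * ∫⁻ y in ball x (2 * t * r), g y ∂μ := by
        rw [lintegral_comp_homothety μ (hg.indicator measurableSet_ball) x ht,
          lintegral_indicator measurableSet_ball]
    _ ≤ ENNReal.ofReal (t ^ finrank ℝ E)⁻¹ * (ε * μ (ball x (2 * t * r))) := by
        gcongr; exact hmax _ (by positivity)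
    _ = 2 ^ finrank ℝ E * ε * μ (ball x₀ r) := by
        rw [Measure.addHaar_ball_mul_of_pos μ x (by positivity),
          ← Measure.addHaar_ball_center μ x₀, mul_left_comm, ← mul_assoc, ← mul_assoc,
          mul_assoc ε, ← ENNReal.ofReal_mul (by positivity),
          show (t ^ finrank ℝ E)⁻¹ * (2 * t) ^ finrank ℝ E = 2 ^ finrank ℝ E by
            rw [mul_pow]; field_simp,
          ENNReal.ofReal_pow zero_le_two, ENNReal.ofReal_ofNat]
        ring

theorem setLIntegral_ball_enorm_sub_le {u : E → F} (hu : Differentiable ℝ u) {x₀ x : E} {r : ℝ}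
    {ε : ℝ≥0∞} (hx : x ∈ ball x₀ r)
    (hmax : ∀ s > 0, ∫⁻ y in ball x s, ‖fderiv ℝ u y‖ₑ ∂μ ≤ ε * μ (ball x s)) :
    ∫⁻ z in ball x₀ r, ‖u z - u x‖ₑ ∂μ ≤
      ENNReal.ofReal (2 * r) * 2 ^ finrank ℝ E * ε * μ (ball x₀ r) := by
  set g : E → ℝ≥0∞ := fun y => ‖fderiv ℝ u y‖ₑ
  have hg : Measurable g := (measurable_fderiv ℝ u).enorm
  have hjoint : Measurable fun p : E × ℝ => g (x + p.2 • (p.1 - x)) :=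
    hg.comp (by fun_prop)
  have hdist : ∀ z ∈ ball x₀ r, ‖z - x‖ₑ ≤ ENNReal.ofReal (2 * r) := fun z hz => by
    rw [← edist_eq_enorm_sub, edist_dist]
    refine ENNReal.ofReal_le_ofReal <| (dist_triangle z x₀ x).trans ?_
    rw [dist_comm x₀ x]; linarith [mem_ball.1 hz, mem_ball.1 hx]
  calc ∫⁻ z in ball x₀ r, ‖u z - u x‖ₑ ∂μ
      ≤ ∫⁻ z in ball x₀ r, (∫⁻ t in Ioc (0 : ℝ) 1, g (x + t • (z - x))) *
          ENNReal.ofReal (2 * r) ∂μ :=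
        setLIntegral_mono' measurableSet_ball fun z hz =>
          (enorm_sub_le_setLIntegral_fderiv_segment hu x z).trans (by gcongr; exact hdist z hz)
    _ = (∫⁻ t in Ioc (0 : ℝ) 1, ∫⁻ z in ball x₀ r, g (x + t • (z - x)) ∂μ) *
          ENNReal.ofReal (2 * r) := by
        rw [lintegral_mul_const' _ _ ENNReal.ofReal_ne_top,
          lintegral_lintegral_swap hjoint.aemeasurable]
    _ ≤ (∫⁻ _ in Ioc (0 : ℝ) 1, 2 ^ finrank ℝ E * ε * μ (ball x₀ r)) *
          ENNReal.ofReal (2 * r) := by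
        gcongr ?_ * _
        exact setLIntegral_mono' measurableSet_Ioc fun t ht =>
          setLIntegral_ball_comp_homothety_le μ hg hx ht.1 hmax
    _ = _ := by
        rw [setLIntegral_const, Real.volume_Ioc, sub_zero, ENNReal.ofReal_one]
        ring

theorem edist_le_of_setLIntegral_ball_fderiv_le {u : E → F} (hu : Differentiable ℝ u)
    {x₀ x y : E} {r : ℝ} {ε : ℝ≥0∞} (hx : x ∈ ball x₀ r) (hy : y ∈ ball x₀ r)
    (hmaxx : ∀ s > 0, ∫⁻ z in ball x s, ‖fderiv ℝ u z‖ₑ ∂μ ≤ ε * μ (ball x s))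
    (hmaxy : ∀ s > 0, ∫⁻ z in ball y s, ‖fderiv ℝ u z‖ₑ ∂μ ≤ ε * μ (ball y s)) :
    edist (u x) (u y) ≤ 2 * (ENNReal.ofReal (2 * r) * 2 ^ finrank ℝ E * ε) := by
  have hr : 0 < r := pos_of_mem_ball hx
  refine (ENNReal.mul_le_mul_iff_left (measure_ball_pos μ x₀ hr).ne' measure_ball_lt_top.ne).1 ?_
  calc edist (u x) (u y) * μ (ball x₀ r) = ∫⁻ _ in ball x₀ r, edist (u x) (u y) ∂μ :=
        (setLIntegral_const _ _).symm
    _ ≤ ∫⁻ z in ball x₀ r, ‖u z - u x‖ₑ + ‖u z - u y‖ₑ ∂μ := lintegral_mono fun z => by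
        simpa only [edist_eq_enorm_sub] using edist_triangle_left (u x) (u y) (u z)
    _ = ∫⁻ z in ball x₀ r, ‖u z - u x‖ₑ ∂μ + ∫⁻ z in ball x₀ r, ‖u z - u y‖ₑ ∂μ :=
        lintegral_add_right _ (hu.continuous.sub continuous_const).enorm.measurable
    _ ≤ _ := add_le_add (setLIntegral_ball_enorm_sub_le μ hu hx hmaxx)
        (setLIntegral_ball_enorm_sub_le μ hu hy hmaxy)
    _ = _ := by ring

end

theorem setLIntegral_ball_le_of_maxFn_le {n : ℕ} {f : EuclideanSpace ℝ (Fin n) → ℝ≥0∞}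
    {x : EuclideanSpace ℝ (Fin n)} {ε : ℝ≥0∞} (h : maxFn f x ≤ ε) {s : ℝ} (hs : 0 < s) :
    ∫⁻ y in ball x s, f y ≤ ε * volume (ball x s) :=
  (ENNReal.div_le_iff (measure_ball_pos volume x hs).ne' measure_ball_lt_top.ne).1 <|
    (le_iSup₂_of_le s hs le_rfl).trans h

theorem diam_image_le_of_maxFn_grad_le_general {n d : ℕ}
    (u : EuclideanSpace ℝ (Fin n) → EuclideanSpace ℝ (Fin d))
    (hdiff : Differentiable ℝ u) :
    ∃ C : ℝ, 0 < C ∧ ∀ (x₀ : EuclideanSpace ℝ (Fin n)) (r ε : ℝ), 0 < r → 0 < ε →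
      EMetric.diam (u '' {x | x ∈ Metric.ball x₀ r ∧
          maxFn (fun y => (‖fderiv ℝ u y‖₊ : ℝ≥0∞)) x ≤ ENNReal.ofReal ε})
        ≤ ENNReal.ofReal (C * ε * r) := by
  refine ⟨2 ^ (n + 2), by positivity, fun x₀ r ε hr hε => Metric.ediam_le ?_⟩
  rintro _ ⟨x, ⟨hx, hMx⟩, rfl⟩ _ ⟨y, ⟨hy, hMy⟩, rfl⟩
  refine (edist_le_of_setLIntegral_ball_fderiv_le volume hdiff hx hy
    (fun _ => setLIntegral_ball_le_of_maxFn_le hMx)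
    (fun _ => setLIntegral_ball_le_of_maxFn_le hMy)).trans_eq ?_
  rw [finrank_euclideanSpace_fin, ← ENNReal.ofReal_ofNat, ← ENNReal.ofReal_pow zero_le_two,
    ← ENNReal.ofReal_mul (by positivity), ← ENNReal.ofReal_mul (by positivity),
    ← ENNReal.ofReal_mul (by positivity)]
  ring_nf

/-- Pointwise Lipschitz-type estimate for `W^{1,1}` maps: on any ball of radius `r`, the image
of the set where the maximal function of the gradient is `≤ ε` has diameter `≤ C_M ε r`. -/
theorem diam_image_le_of_maxFn_grad_le {n d : ℕ}
    (u : EuclideanSpace ℝ (Fin n) → EuclideanSpace ℝ (Fin d))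
    (hdiff : Differentiable ℝ u)
    (hu : Integrable u)
    (hgrad : Integrable fun x => ‖fderiv ℝ u x‖) :
    ∃ C : ℝ, 0 < C ∧ ∀ (x₀ : EuclideanSpace ℝ (Fin n)) (r ε : ℝ), 0 < r → 0 < ε →
      EMetric.diam (u '' {x | x ∈ Metric.ball x₀ r ∧
          maxFn (fun y => (‖fderiv ℝ u y‖₊ : ℝ≥0∞)) x ≤ ENNReal.ofReal ε})
        ≤ ENNReal.ofReal (C * ε * r) :=
  diam_image_le_of_maxFn_grad_le_general u hdiff
end

section
/- Let 0 < α < n + 2 and let G_α be the Bessel kernel on ℝⁿ, defined by Ĝ_α(ξ) = (1 + 4π²|ξ|²)^{-α/2}. Then for each integer j ≥ 1 there is a constant C = C(α, n, j) such that |∇^j G_α(x)| ≤ C |x|^{α - n - j} for all x ≠ 0. -/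
/-!
With `β = (α - n) / 2` and `J γ s = ∫ t ^ γ e^{-π s / t - t / (4π)} dt / t`, the kernel is
`G x = a J β (‖x‖²)`. Differentiating under the integral sign gives `∂ₛ J γ = -π J (γ - 1)`, and
dropping `e^{-t/(4π)}` and substituting `t ↦ 1 / t` gives `|J γ s| ≤ Γ(-γ) (π s) ^ γ` for `γ < 0`.
Since `β < 1`, this yields `|∂ₛᵏ J β s| ≲ s ^ (β - k)` for every `k ≥ 1`.

For a radial function `g (‖y‖²)` with such bounds, rescale `x` to the unit sphere, where every
derivative of `‖·‖²` is bounded by a power of `2`, and apply the Faà di Bruno bound; subtracting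
the constant `g (‖x‖²)` first removes the zeroth-order term, which is not homogeneous of the
right degree.
-/

open MeasureTheory Set Real Topology
open scoped Nat

theorem Real.rpow_le_rpow_add_rpow {t c c₁ c₂ : ℝ} (ht : 0 < t) (h₁ : c₁ ≤ c) (h₂ : c ≤ c₂) :
    t ^ c ≤ t ^ c₁ + t ^ c₂ := by
  rcases le_total t 1 with h | h
  · exact (rpow_le_rpow_of_exponent_ge ht h h₁).trans (le_add_of_nonneg_right (by positivity))
  · exact (rpow_le_rpow_of_exponent_le h h₂).trans (le_add_of_nonneg_left (by positivity))

theorem integrableOn_rpow_mul_exp_neg_div {c p : ℝ} (hc : c < -1) (hp : 0 < p) :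
    IntegrableOn (fun t : ℝ => t ^ c * exp (-p / t)) (Ioi 0) := by
  have h := (integrableOn_Ioi_comp_rpow_iff' (fun v : ℝ => v ^ (-c - 2) * exp (-p * v ^ (1 : ℝ)))
    (p := -1) (by norm_num)).2 (integrableOn_rpow_mul_exp_neg_mul_rpow (by linarith) one_pos hp)
  refine h.congr_fun (fun t (ht : 0 < t) => ?_) measurableSet_Ioi
  simp only [smul_eq_mul, rpow_one, rpow_neg_one, inv_rpow ht.le, ← rpow_neg ht.le, ← mul_assoc,
    ← rpow_add ht]
  ring_nf

theorem integral_rpow_mul_exp_neg_div {γ p : ℝ} (hγ : γ < 0) (hp : 0 < p) :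
    ∫ t in Ioi (0 : ℝ), t ^ (γ - 1) * exp (-p / t) = Gamma (-γ) * p ^ γ := by
  have h := integral_comp_rpow_Ioi (fun v : ℝ => v ^ (-γ - 1) * exp (-(p * v))) (p := -1)
    (by norm_num)
  rw [integral_rpow_mul_exp_neg_mul_Ioi (neg_pos.2 hγ) hp, one_div, inv_rpow hp.le,
    ← rpow_neg hp.le, neg_neg, mul_comm] at h
  rw [← h]
  refine setIntegral_congr_fun measurableSet_Ioi fun t (ht : 0 < t) => ?_
  simp only [smul_eq_mul, rpow_neg_one, inv_rpow ht.le, ← rpow_neg ht.le, abs_neg, abs_one,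
    one_mul, ← mul_assoc, ← rpow_add ht]
  ring_nf

theorem integrableOn_rpow_mul_exp_neg_div_sub_mul (c : ℝ) {p q : ℝ} (hp : 0 < p) (hq : 0 < q) :
    IntegrableOn (fun t : ℝ => t ^ c * exp (-p / t - q * t)) (Ioi 0) := by
  have hdom : IntegrableOn
      (fun t : ℝ => t ^ min c (-2) * exp (-p / t) + t ^ max c 0 * exp (-q * t ^ (1 : ℝ))) (Ioi 0) :=
    (integrableOn_rpow_mul_exp_neg_div (by simp) hp).add
      (integrableOn_rpow_mul_exp_neg_mul_rpow (by simp) one_pos hq)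
  have hcont : ContinuousOn (fun t : ℝ => t ^ c * exp (-p / t - q * t)) (Ioi 0) :=
    fun t (ht : 0 < t) => ContinuousAt.continuousWithinAt (by fun_prop (disch := simp [ht.ne']))
  refine hdom.mono' (hcont.aestronglyMeasurable measurableSet_Ioi)
    ((ae_restrict_iff' measurableSet_Ioi).2 (.of_forall fun t (ht : 0 < t) => ?_))
  rw [norm_of_nonneg (by positivity), rpow_one]
  calc t ^ c * exp (-p / t - q * t)
      ≤ (t ^ min c (-2) + t ^ max c 0) * exp (-p / t - q * t) := by
        gcongr; exact rpow_le_rpow_add_rpow ht (min_le_left _ _) (le_max_left _ _)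
    _ ≤ t ^ min c (-2) * exp (-p / t) + t ^ max c 0 * exp (-q * t) := by
        have : -p / t ≤ 0 := div_nonpos_of_nonpos_of_nonneg (by linarith) ht.le
        rw [add_mul]
        gcongr <;> nlinarith

noncomputable def besselIntegrand (γ s t : ℝ) : ℝ :=
  t ^ γ * exp (-π * s / t - t / (4 * π)) / t

noncomputable def besselIntegral (γ s : ℝ) : ℝ :=
  ∫ t in Ioi 0, besselIntegrand γ s t

section besselIntegrand

variable {γ s t : ℝ}

theorem besselIntegrand_eq (ht : 0 < t) :
    besselIntegrand γ s t = t ^ (γ - 1) * exp (-(π * s) / t - (4 * π)⁻¹ * t) := by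
  rw [besselIntegrand, rpow_sub_one ht.ne']
  ring_nf

theorem besselIntegrand_nonneg (ht : 0 ≤ t) : 0 ≤ besselIntegrand γ s t := by
  unfold besselIntegrand; positivity

theorem besselIntegrand_le_of_le {s' : ℝ} (ht : 0 < t) (hs : s ≤ s') :
    besselIntegrand γ s' t ≤ besselIntegrand γ s t := by
  have : -π * s' / t ≤ -π * s / t := div_le_div_of_nonneg_right (by nlinarith [pi_pos]) ht.le
  unfold besselIntegrand
  gcongr t ^ γ * exp ?_ / t
  linarith

theorem besselIntegrand_le_rpow_mul_exp (ht : 0 < t) :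
    besselIntegrand γ s t ≤ t ^ (γ - 1) * exp (-(π * s) / t) := by
  rw [besselIntegrand_eq ht]
  gcongr
  have : 0 ≤ (4 * π)⁻¹ * t := by positivity
  linarith

theorem hasDerivAt_besselIntegrand (ht : 0 < t) :
    HasDerivAt (besselIntegrand γ · t) (-π * besselIntegrand (γ - 1) s t) s := by
  refine ((((((hasDerivAt_id' s).const_mul (-π)).div_const t).sub_const
    (t / (4 * π))).exp.const_mul (t ^ γ)).div_const t).congr_deriv ?_
  rw [besselIntegrand, rpow_sub_one ht.ne']
  field_simp

theorem integrableOn_besselIntegrand (γ : ℝ) (hs : 0 < s) :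
    IntegrableOn (besselIntegrand γ s) (Ioi 0) :=
  (integrableOn_rpow_mul_exp_neg_div_sub_mul (γ - 1) (by positivity) (by positivity)).congr_fun
    (fun t (ht : 0 < t) => (besselIntegrand_eq ht).symm) measurableSet_Ioi

end besselIntegrand

section besselIntegral

variable {γ s : ℝ}

theorem hasDerivAt_besselIntegral (hs : 0 < s) :
    HasDerivAt (besselIntegral γ) (-π * besselIntegral (γ - 1) s) s := by
  have hball : Metric.ball s (s / 2) ⊆ Ioi 0 := fun s' hs' => by
    rw [Metric.mem_ball, Real.dist_eq, abs_lt] at hs'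
    exact mem_Ioi.2 (by linarith)
  have hmeas : ∀ᶠ s' in 𝓝 s,
      AEStronglyMeasurable (besselIntegrand γ s') (volume.restrict (Ioi 0)) :=
    Filter.mem_of_superset (Metric.ball_mem_nhds s (half_pos hs)) fun s' hs' =>
      (integrableOn_besselIntegrand γ (hball hs')).aestronglyMeasurable
  have h := hasDerivAt_integral_of_dominated_loc_of_deriv_le (μ := volume.restrict (Ioi 0))
    (F' := fun s t => -π * besselIntegrand (γ - 1) s t)
    (bound := fun t => π * besselIntegrand (γ - 1) (s / 2) t)
    (Metric.ball_mem_nhds s (half_pos hs)) hmeas (integrableOn_besselIntegrand γ hs)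
    ((integrableOn_besselIntegrand (γ - 1) hs).aestronglyMeasurable.const_mul _)
    ?_ ((integrableOn_besselIntegrand (γ - 1) (half_pos hs)).const_mul π)
    ((ae_restrict_iff' measurableSet_Ioi).2 (.of_forall fun t ht _ _ =>
      hasDerivAt_besselIntegrand ht))
  · rw [besselIntegral, ← integral_const_mul]
    exact h.2
  · refine (ae_restrict_iff' measurableSet_Ioi).2 (.of_forall fun t (ht : 0 < t) s' hs' => ?_)
    rw [norm_mul, norm_neg, norm_of_nonneg pi_pos.le,
      norm_of_nonneg (besselIntegrand_nonneg ht.le)]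
    have : s / 2 ≤ s' := by
      rw [Metric.mem_ball, Real.dist_eq, abs_lt] at hs'
      linarith
    gcongr
    exact besselIntegrand_le_of_le ht this

theorem iteratedDeriv_besselIntegral (k : ℕ) (hs : 0 < s) :
    iteratedDeriv k (besselIntegral γ) s = (-π) ^ k * besselIntegral (γ - k) s := by
  induction k generalizing s with
  | zero => simp
  | succ k ih =>
    have heq : iteratedDeriv k (besselIntegral γ) =ᶠ[𝓝 s]
        fun u => (-π) ^ k * besselIntegral (γ - k) u :=
      Filter.eventually_of_mem (isOpen_Ioi.mem_nhds hs) fun u hu => ih hu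
    rw [iteratedDeriv_succ, heq.deriv_eq, ((hasDerivAt_besselIntegral hs).const_mul _).deriv]
    push_cast
    ring_nf

open scoped ContDiff in
theorem contDiffOn_besselIntegral (γ : ℝ) : ContDiffOn ℝ ∞ (besselIntegral γ) (Ioi 0) := by
  refine contDiffOn_of_differentiableOn_deriv fun m _ s (hs : 0 < s) => ?_
  have heq : EqOn (iteratedDerivWithin m (besselIntegral γ) (Ioi 0))
      (fun u => (-π) ^ m * besselIntegral (γ - m) u) (Ioi 0) := fun u hu => by
    rw [iteratedDerivWithin_of_isOpen isOpen_Ioi hu, iteratedDeriv_besselIntegral m hu]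
  exact ((hasDerivAt_besselIntegral hs).differentiableAt.const_mul _).differentiableWithinAt.congr
    heq (heq hs)

theorem abs_besselIntegral_le (hγ : γ < 0) (hs : 0 < s) :
    |besselIntegral γ s| ≤ Gamma (-γ) * (π * s) ^ γ := by
  rw [← integral_rpow_mul_exp_neg_div hγ (by positivity), ← norm_eq_abs]
  refine norm_integral_le_of_norm_le (integrableOn_rpow_mul_exp_neg_div (by linarith)
    (by positivity)) ((ae_restrict_iff' measurableSet_Ioi).2 (.of_forall fun t (ht : 0 < t) => ?_))
  rw [norm_of_nonneg (besselIntegrand_nonneg ht.le)]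
  exact besselIntegrand_le_rpow_mul_exp ht

theorem abs_iteratedDeriv_besselIntegral_le {k : ℕ} (hγ : γ < k) (hs : 0 < s) :
    |iteratedDeriv k (besselIntegral γ) s| ≤ π ^ γ * Gamma (k - γ) * s ^ (γ - k) := by
  rw [iteratedDeriv_besselIntegral k hs, abs_mul, abs_pow, abs_neg, abs_of_pos pi_pos]
  calc π ^ k * |besselIntegral (γ - k) s|
      ≤ π ^ k * (Gamma (-(γ - k)) * (π * s) ^ (γ - k)) := by
        gcongr; exact abs_besselIntegral_le (by linarith) hs
    _ = π ^ γ * Gamma (k - γ) * s ^ (γ - k) := by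
        have : π ^ (k : ℝ) * π ^ (γ - k) = π ^ γ := by rw [← rpow_add pi_pos]; ring_nf
        rw [mul_rpow pi_pos.le hs.le, neg_sub, ← rpow_natCast, ← this]
        ring

end besselIntegral

section IteratedFDeriv

variable {𝕜 E F : Type*} [NontriviallyNormedField 𝕜] [NormedAddCommGroup E] [NormedSpace 𝕜 E]
  [NormedAddCommGroup F] [NormedSpace 𝕜 F]

theorem iteratedFDeriv_const_add {n : ℕ} (hn : n ≠ 0) (c : F) (f : E → F) :
    iteratedFDeriv 𝕜 n (fun y => c + f y) = iteratedFDeriv 𝕜 n f := by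
  obtain ⟨n, rfl⟩ := Nat.exists_eq_succ_of_ne_zero hn
  ext1 x
  simp only [iteratedFDeriv_succ_eq_comp_right, fderiv_const_add]

theorem norm_iteratedFDeriv_id_le_one (k : ℕ) {x : E} (hx : ‖x‖ ≤ 1) :
    ‖iteratedFDeriv 𝕜 k (id : E → E) x‖ ≤ 1 := by
  match k with
  | 0 => rwa [norm_iteratedFDeriv_zero]
  | 1 =>
    rw [← norm_iteratedFDeriv_fderiv, norm_iteratedFDeriv_zero, fderiv_id]
    exact ContinuousLinearMap.norm_id_le
  | k + 2 =>
    have hfderiv : fderiv 𝕜 (id : E → E) = fun _ => ContinuousLinearMap.id 𝕜 E :=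
      funext fun _ => fderiv_id
    rw [← norm_iteratedFDeriv_fderiv, hfderiv, iteratedFDeriv_const_of_ne k.succ_ne_zero,
      Pi.zero_apply, norm_zero]
    exact zero_le_one

end IteratedFDeriv

section NormSq

variable {E : Type*} [NormedAddCommGroup E] [InnerProductSpace ℝ E]

theorem norm_iteratedFDeriv_norm_sq_le (k : ℕ) {x : E} (hx : ‖x‖ ≤ 1) :
    ‖iteratedFDeriv ℝ k (fun y : E => ‖y‖ ^ 2) x‖ ≤ 2 ^ k := by
  have hq : (fun y : E => ‖y‖ ^ 2) = fun y => innerSL ℝ (id y) (id y) := by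
    ext y; simp
  rw [hq]
  refine ((innerSL ℝ).norm_iteratedFDeriv_le_of_bilinear_of_le_one contDiff_id contDiff_id x
    (le_refl (k : WithTop ℕ∞)) (norm_innerSL_le ℝ)).trans ?_
  calc ∑ i ∈ Finset.range (k + 1), (k.choose i : ℝ) * ‖iteratedFDeriv ℝ i id x‖ *
        ‖iteratedFDeriv ℝ (k - i) id x‖
      ≤ ∑ i ∈ Finset.range (k + 1), (k.choose i : ℝ) := by
        gcongr with i
        calc (k.choose i : ℝ) * ‖iteratedFDeriv ℝ i id x‖ * ‖iteratedFDeriv ℝ (k - i) id x‖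
            ≤ (k.choose i : ℝ) * 1 * 1 := by
              gcongr <;> exact norm_iteratedFDeriv_id_le_one _ hx
          _ = k.choose i := by ring
    _ = 2 ^ k := by exact_mod_cast Nat.sum_range_choose k

theorem norm_iteratedFDeriv_norm_inv_smul_sq_le (k : ℕ) {r : ℝ} (hr : 0 < r) {x : E}
    (hx : ‖x‖ ≤ r) : ‖iteratedFDeriv ℝ k (fun y : E => ‖r⁻¹ • y‖ ^ 2) x‖ ≤ (2 / r) ^ k := by
  rw [iteratedFDeriv_comp_const_smul r⁻¹ ((contDiff_norm_sq ℝ).of_le le_top), norm_smul, norm_pow,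
    norm_inv, norm_of_nonneg hr.le, div_eq_inv_mul, mul_pow]
  gcongr
  apply norm_iteratedFDeriv_norm_sq_le
  rw [norm_smul, norm_inv, norm_of_nonneg hr.le]
  exact inv_mul_le_one_of_le₀ hx hr.le

end NormSq

theorem norm_iteratedFDerivWithin_comp_mul_sub_le {g : ℝ → ℝ} {j : ℕ}
    (hg : ContDiffOn ℝ j g (Ioi 0)) {M γ : ℝ} (hM0 : 0 ≤ M)
    (hM : ∀ k, 1 ≤ k → k ≤ j → ∀ s, 0 < s → |iteratedDeriv k g s| ≤ M * s ^ (γ - k))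
    {c : ℝ} (hc : 0 < c) {i : ℕ} (hi : i ≤ j) :
    ‖iteratedFDerivWithin ℝ i (fun u => g (c * u) - g c) (Ioi 0) 1‖ ≤ M * c ^ γ := by
  rcases Nat.eq_zero_or_pos i with rfl | hi0
  · simp only [norm_iteratedFDerivWithin_zero, mul_one, sub_self, norm_zero]
    positivity
  have hmaps : MapsTo (c * ·) (Ioi (0 : ℝ)) (Ioi 0) := fun u (hu : 0 < u) => mul_pos hc hu
  rw [norm_iteratedFDerivWithin_eq_norm_iteratedDerivWithin]
  simp only [sub_eq_neg_add]
  rw [iteratedDerivWithin_const_add hi0, iteratedDerivWithin_comp_const_smul (mem_Ioi.2 one_pos)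
    isOpen_Ioi.uniqueDiffOn (hg.of_le (by exact_mod_cast hi)) _ hmaps, mul_one,
    iteratedDerivWithin_of_isOpen isOpen_Ioi hc, norm_smul, norm_pow, norm_of_nonneg hc.le,
    norm_eq_abs]
  calc c ^ i * |iteratedDeriv i g c|
      ≤ c ^ i * (M * c ^ (γ - i)) := by gcongr; exact hM i hi0 hi c hc
    _ = M * c ^ γ := by
      rw [← rpow_natCast, mul_left_comm, ← rpow_add hc]
      ring_nf

theorem norm_iteratedFDeriv_comp_norm_sq_le {E : Type*} [NormedAddCommGroup E]
    [InnerProductSpace ℝ E] {g : ℝ → ℝ} {j : ℕ} (hj : 1 ≤ j) (hg : ContDiffOn ℝ j g (Ioi 0))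
    {M γ : ℝ} (hM : ∀ k, 1 ≤ k → k ≤ j → ∀ s, 0 < s → |iteratedDeriv k g s| ≤ M * s ^ (γ - k))
    {x : E} (hx : x ≠ 0) :
    ‖iteratedFDeriv ℝ j (fun y => g (‖y‖ ^ 2)) x‖ ≤ j ! * M * 2 ^ j * ‖x‖ ^ (2 * γ - j) := by
  set r := ‖x‖ with hr_def
  have hr : 0 < r := norm_pos_iff.2 hx
  have hM0 : 0 ≤ M := by
    simpa using (abs_nonneg _).trans (hM 1 le_rfl hj 1 one_pos)
  set ψ : ℝ → ℝ := fun u => g (r ^ 2 * u) - g (r ^ 2)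
  set q : E → ℝ := fun y => ‖r⁻¹ • y‖ ^ 2
  have hqx : q x = 1 := by
    simp only [q, norm_smul, norm_inv, norm_of_nonneg hr.le, ← hr_def, inv_mul_cancel₀ hr.ne',
      one_pow]
  have hψ : ContDiffOn ℝ j ψ (Ioi 0) :=
    (hg.comp (contDiff_const.mul contDiff_id).contDiffOn
      fun u (hu : 0 < u) => mul_pos (pow_pos hr 2) hu).sub contDiffOn_const
  have hC : ∀ i ≤ j, ‖iteratedFDerivWithin ℝ i ψ (Ioi 0) (q x)‖ ≤ M * (r ^ 2) ^ γ := fun i hi => by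
    rw [hqx]
    exact norm_iteratedFDerivWithin_comp_mul_sub_le hg hM0 hM (pow_pos hr 2) hi
  have hD : ∀ i, 1 ≤ i → i ≤ j → ‖iteratedFDerivWithin ℝ i q {0}ᶜ x‖ ≤ (2 / r) ^ i :=
    fun i _ _ => by
      rw [iteratedFDerivWithin_of_isOpen i isOpen_compl_singleton hx]
      exact norm_iteratedFDeriv_norm_inv_smul_sq_le i hr le_rfl
  have hcomp := norm_iteratedFDerivWithin_comp_le hψ
    ((contDiff_const_smul r⁻¹).norm_sq ℝ).contDiffOn le_rfl isOpen_Ioi.uniqueDiffOn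
    isOpen_compl_singleton.uniqueDiffOn (fun y (hy : y ≠ 0) =>
      pow_pos (norm_pos_iff.2 (smul_ne_zero (inv_ne_zero hr.ne') hy)) 2)
    (mem_compl_singleton_iff.2 hx) hC hD
  rw [iteratedFDerivWithin_of_isOpen j isOpen_compl_singleton hx] at hcomp
  have hdecomp : (fun y : E => g (‖y‖ ^ 2)) = fun y => g (r ^ 2) + (ψ ∘ q) y := by
    ext y
    simp only [ψ, q, Function.comp_apply, norm_smul, norm_inv, norm_of_nonneg hr.le]
    field_simp
    ring
  rw [hdecomp, iteratedFDeriv_const_add (by omega)]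
  refine hcomp.trans (le_of_eq ?_)
  rw [← rpow_natCast r 2, ← rpow_mul hr.le, div_pow, rpow_sub hr, rpow_natCast]
  push_cast
  ring

theorem abs_iteratedDeriv_const_mul_besselIntegral_le (a : ℝ) {γ s : ℝ} (hγ : γ < 1)
    {j k : ℕ} (hk : k ∈ Finset.Icc 1 j) (hs : 0 < s) :
    |iteratedDeriv k (fun s => a * besselIntegral γ s) s|
      ≤ |a| * π ^ γ * (∑ i ∈ Finset.Icc 1 j, Gamma (i - γ)) * s ^ (γ - k) := by
  have hGamma : ∀ i ∈ Finset.Icc 1 j, 0 ≤ Gamma (i - γ) := fun i hi => by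
    have : (1 : ℝ) ≤ i := by exact_mod_cast (Finset.mem_Icc.1 hi).1
    exact (Gamma_pos_of_pos (by linarith)).le
  have hγk : γ < k := by
    have : (1 : ℝ) ≤ k := by exact_mod_cast (Finset.mem_Icc.1 hk).1
    linarith
  rw [iteratedDeriv_const_mul _ ((contDiffOn_besselIntegral γ).contDiffAt
    (isOpen_Ioi.mem_nhds hs) |>.of_le (mod_cast le_top)), abs_mul]
  calc |a| * |iteratedDeriv k (besselIntegral γ) s|
      ≤ |a| * (π ^ γ * Gamma (k - γ) * s ^ (γ - k)) := by
        gcongr; exact abs_iteratedDeriv_besselIntegral_le hγk hs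
    _ ≤ |a| * π ^ γ * (∑ i ∈ Finset.Icc 1 j, Gamma (i - γ)) * s ^ (γ - k) := by
        rw [← mul_assoc, ← mul_assoc]
        gcongr
        exact Finset.single_le_sum hGamma hk

theorem besselKernel_iteratedFDeriv_bound_general {n : ℕ} (α : ℝ) (hα : α < n + 2)
    (a : ℝ) (G : EuclideanSpace ℝ (Fin n) → ℝ)
    (hG : ∀ x, G x = a * ∫ t in Set.Ioi (0 : ℝ),
      t ^ ((α - n) / 2) * Real.exp (-Real.pi * ‖x‖ ^ 2 / t - t / (4 * Real.pi)) / t)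
    (j : ℕ) (hj : 1 ≤ j) :
    ∃ C : ℝ, 0 < C ∧ ∀ x : EuclideanSpace ℝ (Fin n), x ≠ 0 →
      ‖iteratedFDeriv ℝ j G x‖ ≤ C * ‖x‖ ^ (α - n - j) := by
  set β := (α - n) / 2
  have hβ : β < 1 := by rw [div_lt_one two_pos]; linarith
  have hG' : G = fun x => a * besselIntegral β (‖x‖ ^ 2) := funext hG
  set M := |a| * π ^ β * ∑ i ∈ Finset.Icc 1 j, Gamma (i - β)
  refine ⟨j ! * max M 1 * 2 ^ j, by positivity, fun x hx => ?_⟩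
  rw [hG']
  refine (norm_iteratedFDeriv_comp_norm_sq_le hj
    ((contDiffOn_const.mul (contDiffOn_besselIntegral β)).of_le (mod_cast le_top))
    (fun k hk₁ hkj s hs => abs_iteratedDeriv_const_mul_besselIntegral_le a hβ
      (Finset.mem_Icc.2 ⟨hk₁, hkj⟩) hs) hx).trans ?_
  rw [show 2 * β - j = α - n - j by ring]
  gcongr
  exact le_max_left M 1

/-- Derivative bounds for the Bessel kernel `G_α` (defined by its radial integral formula,
with normalizing constant `a > 0`): `|∇^j G_α(x)| ≤ C |x|^{α - n - j}` when `0 < α < n + 2`. -/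
theorem besselKernel_iteratedFDeriv_bound {n : ℕ} (α : ℝ) (hα0 : 0 < α) (hα : α < n + 2)
    (a : ℝ) (ha : 0 < a) (G : EuclideanSpace ℝ (Fin n) → ℝ)
    (hG : ∀ x, G x = a * ∫ t in Set.Ioi (0 : ℝ),
      t ^ ((α - n) / 2) * Real.exp (-Real.pi * ‖x‖ ^ 2 / t - t / (4 * Real.pi)) / t)
    (j : ℕ) (hj : 1 ≤ j) :
    ∃ C : ℝ, 0 < C ∧ ∀ x : EuclideanSpace ℝ (Fin n), x ≠ 0 →
      ‖iteratedFDeriv ℝ j G x‖ ≤ C * ‖x‖ ^ (α - n - j) :=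
  besselKernel_iteratedFDeriv_bound_general α hα a G hG j hj
end

section
/- Let v ∈ C^{k,α}(ℝⁿ, ℝ) (scalar case d = 1, m = 1) with |∇^k v(x) − ∇^k v(y)| ≤ |x−y|^α for all x, y. Let E₁ be the set of points x ∈ Z = {∇v = 0} such that x is a density point of {y : ∇^k v(y) = 0} and ∇^k v(x) = 0. Then for every x ∈ E₁, lim_{y→x} |∇^k v(y) − ∇^k v(x)| / |x − y|^α = 0. -/
/-! At a density point `x` of the zero set of `f = ∇^k v`, for each `c > 0` and each `y` near `x`
the ball `B(y, c‖y - x‖)` meets the zero set: it fills the fixed fraction `(c / (1 + c))^n` of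
`B(x, (1 + c)‖y - x‖)`, in which the zero set has density close to `1`. For a zero `z` in it,
Hölder continuity gives `‖f y‖ = ‖f y - f z‖ ≤ c^α ‖y - x‖^α`. Finally `f x = 0`, since `x` lies
in the closure of the closed set `{f = 0}`. -/

open MeasureTheory Metric Set Filter Topology Module
open scoped NNReal ENNReal

theorem HolderWith.of_dist_le {X Y : Type*} [PseudoMetricSpace X] [PseudoMetricSpace Y]
    {C r : ℝ≥0} {f : X → Y} (h : ∀ a b, dist (f a) (f b) ≤ C * dist a b ^ (r : ℝ)) :
    HolderWith C r f := fun a b => by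
  rw [edist_dist, edist_dist, ENNReal.ofReal_rpow_of_nonneg dist_nonneg r.coe_nonneg,
    ← ENNReal.ofReal_coe_nnreal, ← ENNReal.ofReal_mul C.coe_nonneg]
  exact ENNReal.ofReal_le_ofReal (h a b)

theorem mem_closure_of_tendsto_measure_inter_ball_div {X : Type*} [PseudoMetricSpace X]
    [MeasurableSpace X] (μ : Measure X) {s : Set X} {x : X}
    (hs : Tendsto (fun r => μ (s ∩ ball x r) / μ (ball x r)) (𝓝[>] 0) (𝓝 1)) :
    x ∈ closure s := by
  refine Metric.mem_closure_iff.2 fun ε hε => ?_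
  obtain ⟨r, hpos, hr⟩ :=
    ((hs.eventually (lt_mem_nhds zero_lt_one)).and (Ioo_mem_nhdsGT hε)).exists
  obtain ⟨z, hzs, hzx⟩ := nonempty_of_measure_ne_zero (ENNReal.div_pos_iff.1 hpos).1
  exact ⟨z, hzs, (mem_ball'.1 hzx).trans hr.2⟩

section AddHaar

variable {E : Type*} [NormedAddCommGroup E] [NormedSpace ℝ E] [FiniteDimensional ℝ E]
  [MeasurableSpace E] [BorelSpace E] (μ : Measure E) [μ.IsAddHaarMeasure] {s : Set E} {x : E}

theorem measure_inter_ball_div_le_of_disjoint_ball {y : E} {ρ R : ℝ} (hρ : 0 < ρ)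
    (hsub : ball y ρ ⊆ ball x R) (hs : Disjoint s (ball y ρ)) :
    μ (s ∩ ball x R) / μ (ball x R) ≤ 1 - ENNReal.ofReal ((ρ / R) ^ finrank ℝ E) := by
  have hR : 0 < R := dist_nonneg.trans_lt (mem_ball.1 (hsub (mem_ball_self hρ)))
  have hball : μ (ball y ρ) = ENNReal.ofReal ((ρ / R) ^ finrank ℝ E) * μ (ball x R) := by
    rw [Measure.addHaar_ball_of_pos μ y hρ, Measure.addHaar_ball_of_pos μ x hR, ← mul_assoc,
      ← ENNReal.ofReal_mul (by positivity), ← mul_pow, div_mul_cancel₀ _ hR.ne']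
  have hsum : μ (s ∩ ball x R) + μ (ball y ρ) ≤ μ (ball x R) := by
    rw [← measure_union (hs.mono_left inter_subset_left) measurableSet_ball]
    exact measure_mono (union_subset inter_subset_right hsub)
  have h0 : μ (ball x R) ≠ 0 := (measure_ball_pos μ x hR).ne'
  have htop : μ (ball x R) ≠ ∞ := measure_ball_lt_top.ne
  refine ENNReal.le_sub_of_add_le_right ENNReal.ofReal_ne_top ?_
  rw [← ENNReal.mul_div_cancel_right h0 htop (a := ENNReal.ofReal _), ← hball,
    ENNReal.div_add_div_same, ← ENNReal.div_self h0 htop]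
  exact ENNReal.div_le_div_right hsum _

theorem eventually_exists_mem_dist_lt_mul_of_tendsto_measure_inter_ball_div
    (hs : Tendsto (fun r => μ (s ∩ ball x r) / μ (ball x r)) (𝓝[>] 0) (𝓝 1))
    {c : ℝ} (hc : 0 < c) : ∀ᶠ y in 𝓝[≠] x, ∃ z ∈ s, dist y z < c * dist y x := by
  set θ := ENNReal.ofReal ((c / (1 + c)) ^ finrank ℝ E)
  have hθ : 1 - θ < 1 :=
    ENNReal.sub_lt_self ENNReal.one_ne_top one_ne_zero (ENNReal.ofReal_pos.2 (by positivity)).ne'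
  have hR : Tendsto (fun y => (1 + c) * dist y x) (𝓝[≠] x) (𝓝[>] 0) := by
    refine tendsto_nhdsWithin_iff.2 ⟨?_, ?_⟩
    · have : Tendsto (fun y => (1 + c) * dist y x) (𝓝 x) (𝓝 ((1 + c) * dist x x)) :=
        (by fun_prop : Continuous fun y => (1 + c) * dist y x).tendsto x
      rw [dist_self, mul_zero] at this
      exact this.mono_left nhdsWithin_le_nhds
    · filter_upwards [self_mem_nhdsWithin] with y hy
      exact mul_pos (by linarith) (dist_pos.2 hy)
  filter_upwards [hR.eventually (hs.eventually (eventually_gt_nhds hθ)), self_mem_nhdsWithin]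
    with y hy hyx
  by_contra! hfar
  have hρ : 0 < c * dist y x := mul_pos hc (dist_pos.2 hyx)
  have hsub : ball y (c * dist y x) ⊆ ball x ((1 + c) * dist y x) := fun w hw => by
    rw [mem_ball] at hw ⊢
    linarith [dist_triangle w y x]
  have hdisj : Disjoint s (ball y (c * dist y x)) :=
    disjoint_left.2 fun z hz hzy => (hfar z hz).not_gt (mem_ball'.1 hzy)
  have := measure_inter_ball_div_le_of_disjoint_ball μ hρ hsub hdisj
  rw [mul_div_mul_right _ _ (dist_pos.2 hyx).ne'] at this
  exact hy.not_ge this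

theorem HolderWith.tendsto_norm_sub_div_rpow_of_tendsto_measure_inter_ball_div
    {F : Type*} [NormedAddCommGroup F] {C r : ℝ≥0} {f : E → F} (hf : HolderWith C r f)
    (hr : 0 < r)
    (hs : Tendsto (fun ρ => μ ({y | f y = 0} ∩ ball x ρ) / μ (ball x ρ)) (𝓝[>] 0) (𝓝 1)) :
    Tendsto (fun y => ‖f y - f x‖ / ‖x - y‖ ^ (r : ℝ)) (𝓝[≠] x) (𝓝 0) := by
  have hfx : f x = 0 := (isClosed_eq (hf.continuous hr) continuous_const).closure_subset
    (mem_closure_of_tendsto_measure_inter_ball_div μ hs)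
  have hbound : ∀ c > 0, ∀ᶠ y in 𝓝[≠] x, ‖f y - f x‖ / ‖x - y‖ ^ (r : ℝ) ≤ C * c ^ (r : ℝ) := by
    intro c hc
    filter_upwards [eventually_exists_mem_dist_lt_mul_of_tendsto_measure_inter_ball_div μ hs hc,
      self_mem_nhdsWithin] with y ⟨z, hz, hyz⟩ hyx
    have hpos : 0 < ‖x - y‖ ^ (r : ℝ) :=
      Real.rpow_pos_of_pos (norm_pos_iff.2 (sub_ne_zero.2 (Ne.symm hyx))) _
    rw [div_le_iff₀ hpos, hfx, ← hz, ← dist_eq_norm, ← dist_eq_norm', mul_assoc,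
      ← Real.mul_rpow hc.le dist_nonneg]
    exact hf.dist_le_of_le hyz.le
  have hsmall : Tendsto (fun c : ℝ => (C : ℝ) * c ^ (r : ℝ)) (𝓝[>] 0) (𝓝 0) := by
    have := ((Real.continuousAt_rpow_const 0 r (Or.inr r.coe_nonneg)).tendsto.const_mul (C : ℝ))
    rw [Real.zero_rpow (NNReal.coe_pos.2 hr).ne', mul_zero] at this
    exact this.mono_left nhdsWithin_le_nhds
  refine tendsto_order.2 ⟨fun a ha => Eventually.of_forall fun y => ha.trans_le (by positivity),
    fun ε hε => ?_⟩
  obtain ⟨c, hcε, hc⟩ := ((hsmall.eventually (gt_mem_nhds hε)).and self_mem_nhdsWithin).exists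
  filter_upwards [hbound c hc] with y hy using hy.trans_lt hcε

end AddHaar

theorem holder_quotient_degenerates_general {n : ℕ} (k : ℕ)
    (α : ℝ) (hα0 : 0 < α)
    (v : EuclideanSpace ℝ (Fin n) → ℝ)
    (hHold : ∀ x y, ‖iteratedFDeriv ℝ k v x - iteratedFDeriv ℝ k v y‖ ≤ ‖x - y‖ ^ α)
    (x : EuclideanSpace ℝ (Fin n))
    (hdens : Tendsto
      (fun r : ℝ => volume ({y | iteratedFDeriv ℝ k v y = 0} ∩ Metric.ball x r)
        / volume (Metric.ball x r))
      (nhdsWithin 0 (Set.Ioi 0)) (nhds 1)) :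
    Tendsto (fun y => ‖iteratedFDeriv ℝ k v y - iteratedFDeriv ℝ k v x‖ / ‖x - y‖ ^ α)
      (nhdsWithin x {x}ᶜ) (nhds 0) := by
  have hf : HolderWith 1 ⟨α, hα0.le⟩ (iteratedFDeriv ℝ k v) :=
    HolderWith.of_dist_le fun a b => by
      rw [dist_eq_norm, dist_eq_norm, NNReal.coe_one, one_mul]
      exact hHold a b
  exact hf.tendsto_norm_sub_div_rpow_of_tendsto_measure_inter_ball_div volume hα0 hdens

/-- At a density point `x` of the zero set of the `α`-Hölder continuous `k`-th derivative
of `v` (with `∇^k v(x) = 0`, `∇v(x) = 0`), the Hölder quotient of `∇^k v` degenerates. -/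
theorem holder_quotient_degenerates {n : ℕ} (k : ℕ) (hk : 1 ≤ k)
    (α : ℝ) (hα0 : 0 < α) (hα1 : α ≤ 1)
    (v : EuclideanSpace ℝ (Fin n) → ℝ) (hv : ContDiff ℝ k v)
    (hHold : ∀ x y, ‖iteratedFDeriv ℝ k v x - iteratedFDeriv ℝ k v y‖ ≤ ‖x - y‖ ^ α)
    (x : EuclideanSpace ℝ (Fin n))
    (hxZ : fderiv ℝ v x = 0)
    (hxk : iteratedFDeriv ℝ k v x = 0)
    (hdens : Tendsto
      (fun r : ℝ => volume ({y | iteratedFDeriv ℝ k v y = 0} ∩ Metric.ball x r)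
        / volume (Metric.ball x r))
      (nhdsWithin 0 (Set.Ioi 0)) (nhds 1)) :
    Tendsto (fun y => ‖iteratedFDeriv ℝ k v y - iteratedFDeriv ℝ k v x‖ / ‖x - y‖ ^ α)
      (nhdsWithin x {x}ᶜ) (nhds 0) :=
  holder_quotient_degenerates_general k α hα0 v hHold x hdens
end
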